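/- Fix ε ∈ (0, 1/400). Let P : [1,∞) → ℝ be differentiable, strictly positive, strictly decreasing, with P' nondecreasing on [1,∞), and suppose P satisfies the reflection equation for ε. Then for every γ with 2 < γ < 1/(10·√ε): 3γ√ε · P(1 + γ√ε − γ²ε) + ((γ² − 1)ε − γ³ε^{3/2}) · P'(1 + γ√ε) > 0. -/

import Mathlib

noncomputable section

/-- `P` satisfies the reflection equation for `ε`: for every x ≥ 1,
(1/x³)·P(2 + ε − 1/x) − (1/x)·∫₀^{1/x} s·P(2 + ε − s) ds + 1/(2x³) = P(x). -/
def SatisfiesReflectionEq (ε : ℝ) (P : ℝ → ℝ) : Prop :=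
  ∀ x : ℝ, 1 ≤ x →
    (1 / x ^ 3) * P (2 + ε - 1 / x)
      - (1 / x) * (∫ s in (0:ℝ)..(1 / x), s * P (2 + ε - s))
      + 1 / (2 * x ^ 3) = P x

/-!
Write `s = √ε`, `t = γ s`, `b = 1 + t`, `x = 1 + s` and `y = 2 + ε - 1 / b`, so that
`2 s < t < 1 / 10`. If the estimate failed, convexity of `P` between `1 + t - t²` and `b` would give
`(t² - s² - 4 t³) P'(b) ≤ -3 t P(b)`, and convexity between `y` and `b` would then make `P(y)`
exceed `P(b)` by a definite amount. On the other hand, the reflection equation at `b` and at `x`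
(chosen so that `x ≤ 2 + ε - 1 / x`), with the integrals bounded by the monotonicity of `P`,
bounds `P(y)` from above in terms of `P(b)` and forces `(2 b³ - 1) P(b) ≥ 1`. These constraints
are incompatible, by an explicit polynomial inequality in `s` and `t`.
-/

open Set MeasureTheory

lemma convexOn_Ici_of_monotoneOn_derivWithin {f : ℝ → ℝ} {a : ℝ}
    (hf : DifferentiableOn ℝ f (Ici a)) (hf' : MonotoneOn (derivWithin f (Ici a)) (Ici a)) :
    ConvexOn ℝ (Ici a) f := by
  refine MonotoneOn.convexOn_of_deriv (convex_Ici a) hf.continuousOn ?_ ?_ <;> rw [interior_Ici]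
  · exact hf.mono Ioi_subset_Ici_self
  · intro x hx y hy hxy
    rw [← derivWithin_of_mem_nhds (Ici_mem_nhds hx), ← derivWithin_of_mem_nhds (Ici_mem_nhds hy)]
    exact hf' (Ioi_subset_Ici_self hx) (Ioi_subset_Ici_self hy) hxy

lemma sub_le_mul_derivWithin_of_monotoneOn {f : ℝ → ℝ} {a u v : ℝ}
    (hf : DifferentiableOn ℝ f (Ici a)) (hf' : MonotoneOn (derivWithin f (Ici a)) (Ici a))
    (hu : a ≤ u) (huv : u < v) :
    f v - f u ≤ (v - u) * derivWithin f (Ici a) v := by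
  have hv : v ∈ Ici a := hu.trans huv.le
  have h := (convexOn_Ici_of_monotoneOn_derivWithin hf hf').slope_le_derivWithin hu hv huv
    (hf v hv)
  rwa [slope_def_field, div_le_iff₀' (sub_pos.2 huv)] at h

lemma intervalIntegrable_id_mul_of_monotoneOn {g : ℝ → ℝ} {c d : ℝ} (hcd : c ≤ d)
    (hg : MonotoneOn g (Icc c d)) : IntervalIntegrable (fun r ↦ r * g r) volume c d :=
  (MonotoneOn.intervalIntegrable (by rwa [uIcc_of_le hcd])).continuousOn_mul continuousOn_id

lemma integral_id_mul_le_of_monotoneOn {g : ℝ → ℝ} {c d : ℝ} (hc : 0 ≤ c) (hcd : c ≤ d)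
    (hg : MonotoneOn g (Icc c d)) :
    ∫ r in c..d, r * g r ≤ (d ^ 2 - c ^ 2) / 2 * g d := by
  calc ∫ r in c..d, r * g r ≤ ∫ r in c..d, r * g d :=
        intervalIntegral.integral_mono_on hcd (intervalIntegrable_id_mul_of_monotoneOn hcd hg)
          ((continuous_id.mul continuous_const).intervalIntegrable _ _) fun r hr ↦
            mul_le_mul_of_nonneg_left (hg hr (right_mem_Icc.2 hcd) hr.2) (hc.trans hr.1)
    _ = (d ^ 2 - c ^ 2) / 2 * g d := by rw [intervalIntegral.integral_mul_const, integral_id]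

lemma integral_id_mul_ge_of_monotoneOn {g : ℝ → ℝ} {c d : ℝ} (hc : 0 ≤ c) (hcd : c ≤ d)
    (hg : MonotoneOn g (Icc c d)) :
    (d ^ 2 - c ^ 2) / 2 * g c ≤ ∫ r in c..d, r * g r := by
  calc (d ^ 2 - c ^ 2) / 2 * g c = ∫ r in c..d, r * g c := by
        rw [intervalIntegral.integral_mul_const, integral_id]
    _ ≤ ∫ r in c..d, r * g r :=
        intervalIntegral.integral_mono_on hcd
          ((continuous_id.mul continuous_const).intervalIntegrable _ _)
          (intervalIntegrable_id_mul_of_monotoneOn hcd hg) fun r hr ↦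
            mul_le_mul_of_nonneg_left (hg (left_mem_Icc.2 hcd) hr hr.1) (hc.trans hr.1)

lemma AntitoneOn.monotoneOn_apply_sub {P : ℝ → ℝ} {a : ℝ} (hP : AntitoneOn P (Ici a)) (c : ℝ) :
    MonotoneOn (fun r ↦ P (c - r)) (Iic (c - a)) := fun r hr r' hr' hrr' ↦
  hP (show a ≤ c - r' by linarith [mem_Iic.1 hr']) (show a ≤ c - r by linarith [mem_Iic.1 hr])
    (by linarith)

namespace SatisfiesReflectionEq

variable {ε : ℝ} {P : ℝ → ℝ}

lemma clear_denom (h : SatisfiesReflectionEq ε P) {u : ℝ} (hu : 1 ≤ u) :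
    2 * P (2 + ε - 1 / u) - 2 * u ^ 2 * (∫ r in (0:ℝ)..(1 / u), r * P (2 + ε - r)) + 1
      = 2 * u ^ 3 * P u := by
  rw [← h u hu]
  field_simp

lemma one_le_mul_apply (h : SatisfiesReflectionEq ε P) (hP : AntitoneOn P (Ici 1)) (hε : 0 ≤ ε)
    {u : ℝ} (hu : 1 ≤ u) (hyu : 2 + ε - 1 / u ≤ u) :
    1 ≤ (2 * u ^ 3 - 1) * P u := by
  have hu0 : 0 < u := by linarith
  have hu1 : 1 / u ≤ 1 := (div_le_one hu0).2 hu
  have hJ := integral_id_mul_le_of_monotoneOn le_rfl (one_div_pos.2 hu0).le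
    ((hP.monotoneOn_apply_sub (2 + ε)).mono fun r hr ↦ by
      simp only [mem_Iic]
      linarith [hr.2])
  have hPy : P u ≤ P (2 + ε - 1 / u) := hP (show (1:ℝ) ≤ 2 + ε - 1 / u by linarith) hu hyu
  have hsq : 2 * u ^ 2 * (((1 / u) ^ 2 - 0 ^ 2) / 2) = 1 := by field_simp; ring
  linear_combination h.clear_denom hu + 2 * u ^ 2 * hJ + hPy + P (2 + ε - 1 / u) * hsq

/-- Split the integral at `x` over `[0, 1/x]` at `1/u`: the piece over `[0, 1/u]` is the integral in
the equation at `u`, and the rest is bounded below by monotonicity of `P`. -/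
lemma apply_mul_le (h : SatisfiesReflectionEq ε P) (hP : AntitoneOn P (Ici 1))
    {x u : ℝ} (hx : 1 ≤ x) (hxu : x ≤ u) (hxz : x ≤ 2 + ε - 1 / x) :
    P (2 + ε - 1 / u) * (2 * u ^ 2 * (x ^ 3 - 1) + u ^ 2 + x ^ 2)
      ≤ u ^ 2 - x ^ 2 + 2 * x ^ 2 * u ^ 3 * P u := by
  have hu : 1 ≤ u := hx.trans hxu
  have hx0 : 0 < x := by linarith
  have hu0 : 0 < u := by linarith
  have hux : 1 / u ≤ 1 / x := one_div_le_one_div_of_le hx0 hxu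
  have hx1 : 1 / x ≤ 1 := (div_le_one hx0).2 hx
  have hg : MonotoneOn (fun r ↦ P (2 + ε - r)) (Icc 0 (1 / x)) :=
    (hP.monotoneOn_apply_sub (2 + ε)).mono fun r hr ↦ by
      simp only [mem_Iic]
      linarith [hr.2]
  have hu0' : 0 ≤ 1 / u := (one_div_pos.2 hu0).le
  have hsplit := intervalIntegral.integral_add_adjacent_intervals
    (intervalIntegrable_id_mul_of_monotoneOn hu0' (hg.mono (Icc_subset_Icc_right hux)))
    (intervalIntegrable_id_mul_of_monotoneOn hux (hg.mono (Icc_subset_Icc_left hu0')))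
  have hmid := integral_id_mul_ge_of_monotoneOn hu0' hux (hg.mono (Icc_subset_Icc_left hu0'))
  have hPxz : P (2 + ε - 1 / x) ≤ P x := hP hx (hx.trans hxz) hxz
  have hPzy : P (2 + ε - 1 / u) ≤ P (2 + ε - 1 / x) :=
    hP (show (1:ℝ) ≤ 2 + ε - 1 / x by linarith) (show (1:ℝ) ≤ 2 + ε - 1 / u by linarith)
      (by linarith)
  have hx3 : 0 ≤ x ^ 3 - 1 := by linarith [one_le_pow₀ (n := 3) hx]
  have hmid' : (u ^ 2 - x ^ 2) * P (2 + ε - 1 / u)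
      ≤ 2 * x ^ 2 * u ^ 2 * ∫ r in (1 / u)..(1 / x), r * P (2 + ε - r) := by
    have : 2 * x ^ 2 * u ^ 2 * (((1 / x) ^ 2 - (1 / u) ^ 2) / 2) = u ^ 2 - x ^ 2 := by field_simp
    linear_combination 2 * x ^ 2 * u ^ 2 * hmid - P (2 + ε - 1 / u) * this
  have hfx := h.clear_denom hx
  have hfu := h.clear_denom hu
  linear_combination -u ^ 2 * hfx + x ^ 2 * hfu + 2 * x ^ 2 * u ^ 2 * hsplit + hmid'
    + 2 * u ^ 2 * x ^ 3 * hPxz + 2 * u ^ 2 * (x ^ 3 - 1) * hPzy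

end SatisfiesReflectionEq

lemma key_polynomial_lt {s t : ℝ} (hs : 0 < s) (hst : 2 * s < t) (ht : 10 * t < 1) :
    (1 + t) * ((1 + t) ^ 2 - (1 + s) ^ 2) * (2 * (1 + t) ^ 3 - 1) * (t ^ 2 - s ^ 2 - 4 * t ^ 3)
      < ((t ^ 2 - s ^ 2 - 4 * t ^ 3) * (1 + t) + 3 * t * (t ^ 2 - s ^ 2 - s ^ 2 * t))
          * (2 * (1 + t) ^ 2 * ((1 + s) ^ 3 - 1) + (1 + t) ^ 2 + (1 + s) ^ 2)
        - 2 * (t ^ 2 - s ^ 2 - 4 * t ^ 3) * (1 + s) ^ 2 * ((1 + t) * (1 + t) ^ 3) := by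
  set K := 42 * t + 76 * t ^ 2 + 56 * t ^ 3 + 24 * t ^ 4 + 16 * t ^ 5 + 8 * t ^ 6
      + s * (6 + 39 * t + 75 * t ^ 2 + 60 * t ^ 3 + 18 * t ^ 4)
      + s ^ 2 * (2 + 12 * t + 24 * t ^ 2 + 20 * t ^ 3 + 6 * t ^ 4) with hK_def
  have hexpand : ((t ^ 2 - s ^ 2 - 4 * t ^ 3) * (1 + t) + 3 * t * (t ^ 2 - s ^ 2 - s ^ 2 * t))
          * (2 * (1 + t) ^ 2 * ((1 + s) ^ 3 - 1) + (1 + t) ^ 2 + (1 + s) ^ 2)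
        - 2 * (t ^ 2 - s ^ 2 - 4 * t ^ 3) * (1 + s) ^ 2 * ((1 + t) * (1 + t) ^ 3)
      - (1 + t) * ((1 + t) ^ 2 - (1 + s) ^ 2) * (2 * (1 + t) ^ 3 - 1) * (t ^ 2 - s ^ 2 - 4 * t ^ 3)
      = s * (6 * (t ^ 2 - s ^ 2) + 18 * t ^ 3 - s ^ 2 * K)
        + t ^ 4 * (61 * t - 18 * s - 48 * s * t - 24 * s * t ^ 2)
        + t ^ 5 * (108 * t ^ 2 - 36 * s ^ 2 - 22 * s ^ 2 * t)
        + (6 * t ^ 4 + 122 * t ^ 6 + 46 * t ^ 8 + 8 * t ^ 9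
          + 18 * s ^ 2 * t ^ 2 + 44 * s ^ 2 * t ^ 3 + 9 * s ^ 2 * t ^ 4) := by
    rw [hK_def]; ring
  have ht0 : 0 < t := by linarith
  have hst2 : 4 * s ^ 2 < t ^ 2 := by nlinarith
  have hK : K ≤ 18 := by
    have ht1 : t ≤ 1 / 10 := by linarith
    have hs1 : s ≤ 1 / 20 := by linarith
    calc K ≤ 42 * (1 / 10) + 76 * (1 / 10) ^ 2 + 56 * (1 / 10) ^ 3 + 24 * (1 / 10) ^ 4
          + 16 * (1 / 10) ^ 5 + 8 * (1 / 10) ^ 6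
          + 1 / 20 * (6 + 39 * (1 / 10) + 75 * (1 / 10) ^ 2 + 60 * (1 / 10) ^ 3 + 18 * (1 / 10) ^ 4)
          + (1 / 20) ^ 2 * (2 + 12 * (1 / 10) + 24 * (1 / 10) ^ 2 + 20 * (1 / 10) ^ 3
            + 6 * (1 / 10) ^ 4) := by
          rw [hK_def]; gcongr
      _ ≤ 18 := by norm_num
  -- `K ≤ 18` leaves `6 s (t² - 4 s²) > 0` from the leading term.
  have hmain : 0 < s * (6 * (t ^ 2 - s ^ 2) + 18 * t ^ 3 - s ^ 2 * K) :=
    mul_pos hs (by nlinarith [mul_le_mul_of_nonneg_left hK (sq_nonneg s), pow_pos ht0 3])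
  have ht4 : 0 ≤ t ^ 4 * (61 * t - 18 * s - 48 * s * t - 24 * s * t ^ 2) :=
    mul_nonneg (by positivity) (by nlinarith [mul_pos hs ht0, mul_pos (mul_pos hs ht0) ht0])
  have ht5 : 0 ≤ t ^ 5 * (108 * t ^ 2 - 36 * s ^ 2 - 22 * s ^ 2 * t) :=
    mul_nonneg (by positivity) (by nlinarith [mul_pos (pow_pos hs 2) ht0])
  have hrest : (0:ℝ) ≤ 6 * t ^ 4 + 122 * t ^ 6 + 46 * t ^ 8 + 8 * t ^ 9
      + 18 * s ^ 2 * t ^ 2 + 44 * s ^ 2 * t ^ 3 + 9 * s ^ 2 * t ^ 4 := by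
    positivity
  linarith

lemma key_estimate_of_bounds {s t pa pb py D : ℝ} (hs : 0 < s) (hst : 2 * s < t)
    (ht : 10 * t < 1) (hlow : 1 ≤ (2 * (1 + t) ^ 3 - 1) * pb)
    (hup : py * (2 * (1 + t) ^ 2 * ((1 + s) ^ 3 - 1) + (1 + t) ^ 2 + (1 + s) ^ 2)
      ≤ (1 + t) ^ 2 - (1 + s) ^ 2 + 2 * (1 + s) ^ 2 * (1 + t) ^ 3 * pb)
    (hconv_y : (1 + t) * (pb - py) ≤ (t ^ 2 - s ^ 2 - s ^ 2 * t) * D)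
    (hconv_a : pb - pa ≤ t ^ 2 * D) :
    0 < 3 * t * pa + (t ^ 2 - s ^ 2 - t ^ 3) * D := by
  have ht0 : 0 < t := by linarith
  have hpoly := key_polynomial_lt hs hst ht
  set A := t ^ 2 - s ^ 2 - 4 * t ^ 3
  set B := t ^ 2 - s ^ 2 - s ^ 2 * t
  set Q := 2 * (1 + t) ^ 2 * ((1 + s) ^ 3 - 1) + (1 + t) ^ 2 + (1 + s) ^ 2
  set W := (1 + t) ^ 2 - (1 + s) ^ 2
  set R := (A * (1 + t) + 3 * t * B) * Q - 2 * A * (1 + s) ^ 2 * ((1 + t) * (1 + t) ^ 3)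
  have hA : 0 < A := by nlinarith
  have hB : 0 ≤ B := by nlinarith
  have hs3 : 0 ≤ (1 + s) ^ 3 - 1 := by linarith [one_le_pow₀ (n := 3) (show 1 ≤ 1 + s by linarith)]
  have hQ : 0 ≤ Q := by positivity
  have hW : 0 ≤ W := sub_nonneg.2 (pow_le_pow_left₀ (by linarith) (by linarith) 2)
  have hb3 : 0 ≤ 2 * (1 + t) ^ 3 - 1 := by
    linarith [one_le_pow₀ (n := 3) (show 1 ≤ 1 + t by linarith)]
  by_contra! hneg
  have hD : A * D ≤ -(3 * t * pb) := by linear_combination hneg + 3 * t * hconv_a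
  have hpy : 3 * t * B * pb ≤ A * (1 + t) * (py - pb) := by
    linear_combination A * hconv_y + B * hD
  have hpb : R * pb ≤ A * (1 + t) * W := by linear_combination A * (1 + t) * hup + Q * hpy
  have hR : 0 ≤ R := by
    have : 0 ≤ (1 + t) * W * (2 * (1 + t) ^ 3 - 1) * A := by positivity
    linarith
  have : R ≤ (1 + t) * W * (2 * (1 + t) ^ 3 - 1) * A := by
    linear_combination R * hlow + (2 * (1 + t) ^ 3 - 1) * hpb
  linarith

theorem reflection_key_estimate {P : ℝ → ℝ} {s t : ℝ}
    (hdiff : DifferentiableOn ℝ P (Ici 1)) (hanti : AntitoneOn P (Ici 1))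
    (hmono : MonotoneOn (derivWithin P (Ici 1)) (Ici 1)) (hrefl : SatisfiesReflectionEq (s ^ 2) P)
    (hs : 0 < s) (hst : 2 * s < t) (ht : 10 * t < 1) :
    0 < 3 * t * P (1 + t - t ^ 2) + (t ^ 2 - s ^ 2 - t ^ 3) * derivWithin P (Ici 1) (1 + t) := by
  have ht0 : 0 < t := by linarith
  have hb0 : 0 < 1 + t := by linarith
  set y := 2 + s ^ 2 - 1 / (1 + t)
  have hby : (1 + t) * (1 + t - y) = t ^ 2 - s ^ 2 - s ^ 2 * t := by
    simp only [y]; field_simp; ring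
  have hyb : y < 1 + t := by nlinarith
  have hy : 1 ≤ y := by
    have : 1 / (1 + t) ≤ 1 := (div_le_one hb0).2 (by linarith)
    simp only [y]; nlinarith
  have hxz : 1 + s ≤ 2 + s ^ 2 - 1 / (1 + s) := by
    have : 1 / (1 + s) ≤ 1 + s ^ 2 - s := by
      rw [div_le_iff₀ (by linarith)]; nlinarith
    linarith
  have hconv_a := sub_le_mul_derivWithin_of_monotoneOn hdiff hmono
    (show 1 ≤ 1 + t - t ^ 2 by nlinarith) (show 1 + t - t ^ 2 < 1 + t by nlinarith)
  have hconv_y := sub_le_mul_derivWithin_of_monotoneOn hdiff hmono hy hyb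
  refine key_estimate_of_bounds hs hst ht
    (hrefl.one_le_mul_apply hanti (sq_nonneg s) (by linarith) hyb.le)
    (hrefl.apply_mul_le hanti (x := 1 + s) (u := 1 + t) (by linarith) (by linarith) hxz)
    ?_ (by linear_combination hconv_a)
  rw [← hby, mul_assoc]
  exact mul_le_mul_of_nonneg_left hconv_y hb0.le

theorem key_positivity (ε : ℝ) (P : ℝ → ℝ)
    (hdiff : DifferentiableOn ℝ P (Set.Ici (1:ℝ)))
    (hanti : StrictAntiOn P (Set.Ici (1:ℝ)))
    (hmono : MonotoneOn (derivWithin P (Set.Ici (1:ℝ))) (Set.Ici (1:ℝ)))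
    (hrefl : SatisfiesReflectionEq ε P) :
    ∀ γ : ℝ, 2 < γ → γ < 1 / (10 * Real.sqrt ε) →
      0 < 3 * γ * Real.sqrt ε * P (1 + γ * Real.sqrt ε - γ ^ 2 * ε)
        + ((γ ^ 2 - 1) * ε - γ ^ 3 * ε ^ ((3:ℝ)/2))
          * derivWithin P (Set.Ici (1:ℝ)) (1 + γ * Real.sqrt ε) := by
  intro γ hγ hγε
  set s := Real.sqrt ε
  have hs : 0 < s := by
    have : 0 < 10 * s := one_div_pos.1 (by linarith)
    linarith
  have hε : ε = s ^ 2 := (Real.sq_sqrt (Real.sqrt_pos.1 hs).le).symm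
  have hε32 : ε ^ ((3:ℝ)/2) = s ^ 3 := by
    rw [Real.rpow_div_two_eq_sqrt 3 (Real.sqrt_pos.1 hs).le]
    norm_cast
  have ht : 10 * (γ * s) < 1 := by
    have := (lt_div_iff₀ (by positivity)).1 hγε
    linarith
  have key := reflection_key_estimate hdiff hanti.antitoneOn hmono (hε ▸ hrefl) hs (by nlinarith) ht
  rw [hε32, hε, show 1 + γ * s - γ ^ 2 * s ^ 2 = 1 + γ * s - (γ * s) ^ 2 by ring]
  linear_combination key
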